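/- Let n ≥ 1 and let x₁ ≤ x₂ ≤ ⋯ ≤ x_{3n} be a nondecreasing 3n-tuple of real numbers. For every partition of the index set {1, …, 3n} into n pairwise disjoint 3-element subsets S₁, …, S_n, the partition into consecutive triples is minimal: ∑_{m=1}^{n} A(x_{3m−2}, x_{3m−1}, x_{3m}) ≤ ∑_{m=1}^{n} A(x_{S_m}), where A(x_S) denotes the distance within the triple of values indexed by S. -/

import Mathlib

/-- The distance within the tuple of values indexed by a finite index set `S`:
the sum of `|x j - x i|` over all pairs `i < j` in `S`. -/
def distWithin {m : ℕ} (x : Fin m → ℝ) (S : Finset (Fin m)) : ℝ :=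
  ∑ i ∈ S, ∑ j ∈ S.filter (fun j => i < j), |x j - x i|

/-!
Write `x` as a sum of its consecutive gaps `x (k + 1) - x k`. For sorted values,
`|x j - x i|` is the sum of the gaps `k` with `i ≤ k < j`, so the distance within a set `S`
is `∑ₖ aₖ (|S| - aₖ) · gapₖ`, where `aₖ` is the number of elements of `S` that are `≤ k`.
For a partition into 3-sets the numbers `aₖ` of the blocks add up to `k + 1`; unless
`3 ∣ k + 1`, some block has `aₖ ∈ {1, 2}` and contributes at least `2 · gapₖ`. The
consecutive triples attain exactly `2 · gapₖ` for these `k` and `0` for the others.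
-/

open Finset

noncomputable def gap {N : ℕ} (x : Fin N → ℝ) (k : ℕ) : ℝ :=
  if h : k + 1 < N then x ⟨k + 1, h⟩ - x ⟨k, Nat.lt_of_succ_lt h⟩ else 0

def straddleCount {N : ℕ} (S : Finset (Fin N)) (k : ℕ) : ℕ :=
  #(S.filter (·.val ≤ k)) * #(S.filter (k < ·.val))

section Gaps

variable {N : ℕ} {x : Fin N → ℝ}

lemma gap_eq (x : Fin N → ℝ) {k : ℕ} (h : k + 1 < N) :
    gap x k = x ⟨k + 1, h⟩ - x ⟨k, Nat.lt_of_succ_lt h⟩ :=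
  dif_pos h

lemma gap_nonneg (hx : Monotone x) (k : ℕ) : 0 ≤ gap x k := by
  unfold gap
  split_ifs
  · exact sub_nonneg.2 (hx (Fin.mk_le_mk.2 k.le_succ))
  · exact le_rfl

lemma sub_eq_sum_gap (x : Fin N → ℝ) {i j : Fin N} (hij : i ≤ j) :
    x j - x i = ∑ k ∈ Ico i.val j.val, gap x k := by
  let f : ℕ → ℝ := fun k => if h : k < N then x ⟨k, h⟩ else 0
  have hgap : ∀ k ∈ Ico i.val j.val, gap x k = f (k + 1) - f k := by
    intro k hk
    have hk : k + 1 < N := by have := j.isLt; simp only [mem_Ico] at hk; omega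
    simp [gap, f, hk, Nat.lt_of_succ_lt hk]
  rw [sum_congr rfl hgap, sum_Ico_sub f (Fin.le_def.1 hij)]
  simp [f]

lemma sum_ite_gap_eq (hx : Monotone x) (i j : Fin N) :
    ∑ k ∈ range N, (if i.val ≤ k ∧ k < j.val then gap x k else 0) =
      if i < j then |x j - x i| else 0 := by
  have hIco : (range N).filter (fun k => i.val ≤ k ∧ k < j.val) = Ico i.val j.val := by
    ext k
    simp only [mem_filter, mem_range, mem_Ico]
    have := j.isLt
    omega
  rw [← sum_filter, hIco]
  split_ifs with hij
  · rw [abs_of_nonneg (sub_nonneg.2 (hx hij.le)), sub_eq_sum_gap x hij.le]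
  · rw [Ico_eq_empty (mt Fin.lt_def.2 hij), sum_empty]

theorem distWithin_eq_sum_straddleCount_mul_gap (hx : Monotone x) (S : Finset (Fin N)) :
    distWithin x S = ∑ k ∈ range N, (straddleCount S k : ℝ) * gap x k := by
  have hpair : ∀ i ∈ S, ∑ j ∈ S.filter (i < ·), |x j - x i| =
      ∑ j ∈ S, ∑ k ∈ range N, (if i.val ≤ k ∧ k < j.val then gap x k else 0) := by
    intro i _
    rw [sum_filter]
    exact sum_congr rfl fun j _ => (sum_ite_gap_eq hx i j).symm
  rw [distWithin, sum_congr rfl hpair, sum_congr rfl fun i _ => sum_comm, sum_comm]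
  refine sum_congr rfl fun k _ => ?_
  simp only [ite_and, sum_ite_irrel, ← sum_filter, sum_const, nsmul_eq_mul, mul_zero,
    straddleCount, Nat.cast_mul]
  ring

end Gaps

lemma abs_sub_add_abs_sub_add_abs_sub_of_le {a b c : ℝ} (hab : a ≤ b) (hbc : b ≤ c) :
    |b - a| + |c - b| + |c - a| = 2 * ((b - a) + (c - b)) := by
  rw [abs_of_nonneg (sub_nonneg.2 hab), abs_of_nonneg (sub_nonneg.2 hbc),
    abs_of_nonneg (sub_nonneg.2 (hab.trans hbc))]
  ring

lemma sum_range_mul_eq_sum_sum {M : Type*} [AddCommMonoid M] (k n : ℕ) (f : ℕ → M) :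
    ∑ i ∈ range (k * n), f i = ∑ m ∈ range n, ∑ j ∈ range k, f (k * m + j) := by
  induction n with
  | zero => simp
  | succ n ih => rw [Nat.mul_succ, sum_range_add, ih, sum_range_succ]

lemma two_le_sum_mul_three_sub {ι : Type*} (s : Finset ι) (a : ι → ℕ) (ha : ∀ i ∈ s, a i ≤ 3)
    (hsum : ¬ 3 ∣ ∑ i ∈ s, a i) : 2 ≤ ∑ i ∈ s, a i * (3 - a i) := by
  obtain ⟨i, hi, hai⟩ : ∃ i ∈ s, a i = 1 ∨ a i = 2 := by
    by_contra! h
    refine hsum (dvd_sum fun i hi => ?_)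
    obtain h0 | h3 : a i = 0 ∨ a i = 3 := by have := ha i hi; have := h i hi; omega
    · simp [h0]
    · simp [h3]
  calc 2 = a i * (3 - a i) := by rcases hai with h | h <;> simp [h]
    _ ≤ ∑ i ∈ s, a i * (3 - a i) :=
      single_le_sum (f := fun i => a i * (3 - a i)) (fun _ _ => Nat.zero_le _) hi

section Partition

variable {ι : Type*} [Fintype ι] {N : ℕ} {S : ι → Finset (Fin N)}

lemma sum_card_filter_of_partition (hdisj : Pairwise fun a b => Disjoint (S a) (S b))
    (hcover : ∀ p : Fin N, ∃ m, p ∈ S m) (P : Fin N → Prop) [DecidablePred P] :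
    ∑ m, #((S m).filter P) = #(univ.filter P) := by
  classical
  have hunion : univ.biUnion S = univ :=
    eq_univ_of_forall fun p => mem_biUnion.2 <| (hcover p).imp fun m hm => ⟨mem_univ m, hm⟩
  rw [← hunion, filter_biUnion, card_biUnion]
  exact fun a _ b _ hab => disjoint_filter_filter (hdisj hab)

lemma two_le_sum_straddleCount (hcard : ∀ m, #(S m) = 3)
    (hdisj : Pairwise fun a b => Disjoint (S a) (S b)) (hcover : ∀ p : Fin N, ∃ m, p ∈ S m)
    {k : ℕ} (hk : k < N) (hk3 : ¬ 3 ∣ k + 1) : 2 ≤ ∑ m, straddleCount (S m) k := by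
  have hsplit : ∀ m, #((S m).filter (k < ·.val)) = 3 - #((S m).filter (·.val ≤ k)) := by
    intro m
    rw [← hcard m, ← card_filter_add_card_filter_not (s := S m) (·.val ≤ k)]
    simp [not_le]
  have hsum : ∑ m, #((S m).filter (·.val ≤ k)) = k + 1 := by
    rw [sum_card_filter_of_partition hdisj hcover, ← Fin.card_Iic (⟨k, hk⟩ : Fin N)]
    congr 1
    ext i
    simp [Fin.le_def]
  simp only [straddleCount, hsplit]
  exact two_le_sum_mul_three_sub _ _ (fun m _ => hcard m ▸ card_filter_le _ _) (hsum ▸ hk3)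

end Partition

/-- For a sorted `3n`-tuple, the partition into consecutive triples minimizes
the total distance within, over all partitions of the `3n` indices into `n`
pairwise disjoint 3-element subsets. -/
theorem consecutive_triples_min_abs (n : ℕ) (x : Fin (3 * n) → ℝ)
    (hx : Monotone x) (S : Fin n → Finset (Fin (3 * n)))
    (hcard : ∀ m, (S m).card = 3)
    (hdisj : Pairwise fun a b => Disjoint (S a) (S b))
    (hcover : ∀ p : Fin (3 * n), ∃ m, p ∈ S m) :
    ∑ m : Fin n,
        (|x ⟨3 * (m : ℕ) + 1, by have := m.isLt; omega⟩ -
            x ⟨3 * (m : ℕ), by have := m.isLt; omega⟩| +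
          |x ⟨3 * (m : ℕ) + 2, by have := m.isLt; omega⟩ -
            x ⟨3 * (m : ℕ) + 1, by have := m.isLt; omega⟩| +
          |x ⟨3 * (m : ℕ) + 2, by have := m.isLt; omega⟩ -
            x ⟨3 * (m : ℕ), by have := m.isLt; omega⟩|) ≤
      ∑ m : Fin n, distWithin x (S m) := by
  set c : ℕ → ℝ := fun k => ((∑ m, straddleCount (S m) k : ℕ) : ℝ)
  have hc : ∀ k, k < 3 * n → ¬ 3 ∣ k + 1 → 2 ≤ c k := fun k hk hk3 => by
    simp only [c]
    exact_mod_cast two_le_sum_straddleCount hcard hdisj hcover hk hk3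
  calc _ = ∑ m : Fin n, 2 * (gap x (3 * m) + gap x (3 * m + 1)) := by
        refine sum_congr rfl fun m _ => ?_
        have := m.isLt
        rw [gap_eq x (k := 3 * m) (by omega), gap_eq x (k := 3 * m + 1) (by omega)]
        exact abs_sub_add_abs_sub_add_abs_sub_of_le (hx (by simp)) (hx (by simp))
    _ ≤ ∑ m : Fin n, (c (3 * m) * gap x (3 * m) + c (3 * m + 1) * gap x (3 * m + 1) +
          c (3 * m + 2) * gap x (3 * m + 2)) := by
        refine sum_le_sum fun m _ => ?_
        have := m.isLt
        have h0 := mul_le_mul_of_nonneg_right (hc (3 * m) (by omega) (by omega))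
          (gap_nonneg hx (3 * m))
        have h1 := mul_le_mul_of_nonneg_right (hc (3 * m + 1) (by omega) (by omega))
          (gap_nonneg hx (3 * m + 1))
        have h2 := mul_nonneg (Nat.cast_nonneg _ : 0 ≤ c (3 * m + 2)) (gap_nonneg hx (3 * m + 2))
        linarith
    _ = ∑ k ∈ range (3 * n), c k * gap x k := by
        rw [sum_range_mul_eq_sum_sum, ← Fin.sum_univ_eq_sum_range]
        simp [sum_range_succ]
    _ = ∑ m : Fin n, distWithin x (S m) := by
        simp only [distWithin_eq_sum_straddleCount_mul_gap hx, c, Nat.cast_sum, sum_mul]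
        exact sum_comm
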